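/- arXiv:1605.05282 — 5 statements merged into one kernel-verified Lean document; each statement's English description precedes it below -/
import Mathlib

section
/- Let k ≥ 2 and let Z be a random vector in ℝ^k with independent standard normal coordinates Z^{(1)}, ..., Z^{(k)}. Set f_1(x) = x^{(1)} x^{(2)} ... x^{(k)}. Then there exist constants l_k, L_k > 0 depending only on k such that for all real t with |t| ≥ 1, l_k |t|^{-1} ln^{k-2}|t| ≤ |E exp{i t f_1(Z)}| ≤ L_k |t|^{-1} ln^{k-2}(2 + |t|). -/
open MeasureTheory ProbabilityTheory Filter Set

/-!
Integrating out one coordinate with `E exp(i a X) = exp(-a²/2)` turns `E exp(i t Z₁⋯Zₖ)` into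
the real quantity `G_{k-1}(t) = E exp(-(t W₁⋯W_{k-1})²/2)`, an even function with values in
`[0, 1]`, with `G₁(t) = (1 + t²)^(-1/2)` and `G_{m+1}(t) = E G_m(t X)`. Bounds
`c t⁻¹ logᵐ t ≤ G_{m+1}(t) ≤ C t⁻¹ logᵐ (2 + t)` for `t ≥ 1` propagate along this recursion: on
`t⁻¹ < |x| ≤ 1` the factor `(t |x|)⁻¹` integrates against the bounded Gaussian density to
`t⁻¹ log t`, which raises the power of the logarithm by one, while `|x| ≤ t⁻¹` contributes
`O(t⁻¹)` and `|x| > 1` contributes `O(t⁻¹ logᵐ (2 + t))` by the finiteness of Gaussian moments.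
-/

namespace GaussianProduct

open Real

local notation "φ" => gaussianPDFReal 0 1

lemma gaussianPDFReal_zero_one_eq (x : ℝ) : φ x = (√(2 * π))⁻¹ * exp (-x ^ 2 / 2) := by
  simp [gaussianPDFReal]

lemma gaussianPDFReal_zero_one_abs (x : ℝ) : φ |x| = φ x := by
  simp only [gaussianPDFReal_zero_one_eq, sq_abs]

lemma gaussianPDFReal_zero_one_le_half (x : ℝ) : φ x ≤ 1 / 2 := by
  have h2 : 2 ≤ √(2 * π) := Real.le_sqrt_of_sq_le (by nlinarith [pi_gt_three])
  rw [gaussianPDFReal_zero_one_eq]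
  calc (√(2 * π))⁻¹ * exp (-x ^ 2 / 2) ≤ 2⁻¹ * 1 := by
        gcongr
        exact exp_le_one_iff.mpr (by nlinarith [sq_nonneg x])
    _ = 1 / 2 := by norm_num

lemma gaussianPDFReal_one_le_of_abs_le_one {x : ℝ} (hx : |x| ≤ 1) : φ 1 ≤ φ x := by
  rw [gaussianPDFReal_zero_one_eq, gaussianPDFReal_zero_one_eq]
  gcongr ?_ * exp ?_
  nlinarith [sq_abs x, abs_nonneg x]

lemma integrableOn_pow_mul_gaussianPDFReal (m : ℕ) :
    IntegrableOn (fun x => x ^ m * φ x) (Ioi 0) := by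
  have h := (integrableOn_rpow_mul_exp_neg_mul_sq (b := 1 / 2) (by norm_num)
    (s := m) (by linarith [(Nat.cast_nonneg m : (0 : ℝ) ≤ m)])).const_mul (√(2 * π))⁻¹
  refine IntegrableOn.congr_fun h (fun x _ => ?_) measurableSet_Ioi
  simp only [gaussianPDFReal_zero_one_eq, rpow_natCast]
  ring_nf

lemma integral_gaussianReal_eq_two_mul_setIntegral_Ioi {f : ℝ → ℝ} (hf : ∀ x, f |x| = f x) :
    ∫ x, f x ∂gaussianReal 0 1 = 2 * ∫ x in Ioi 0, φ x * f x := by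
  rw [integral_gaussianReal_eq_integral_smul one_ne_zero, ← integral_comp_abs]
  simp_rw [smul_eq_mul, gaussianPDFReal_zero_one_abs, hf]

lemma prod_piFinSuccAbove_symm_zero {m : ℕ} (p : ℝ × (Fin m → ℝ)) :
    ∏ i, (MeasurableEquiv.piFinSuccAbove (fun _ => ℝ) 0).symm p i = p.1 * ∏ j, p.2 j := by
  simp [MeasurableEquiv.piFinSuccAbove_symm_apply, Fin.insertNthEquiv, Fin.prod_univ_succ]

lemma integral_comp_prod_fin_succ {E : Type*} [NormedAddCommGroup E] [NormedSpace ℝ E]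
    {m : ℕ} (μ : Measure ℝ) [SigmaFinite μ] (f : ℝ → E) :
    ∫ z : Fin (m + 1) → ℝ, f (∏ i, z i) ∂Measure.pi (fun _ => μ) =
      ∫ p, f (p.1 * ∏ j, p.2 j) ∂μ.prod (Measure.pi fun _ : Fin m => μ) := by
  rw [← (measurePreserving_piFinSuccAbove (fun _ => μ) 0).symm.integral_comp']
  simp_rw [prod_piFinSuccAbove_symm_zero]

/-- After integrating out one coordinate, the characteristic function of the product of `m + 1`
independent standard Gaussians (`integral_cexp_I_mul_prod_eq_expNegSqProd`). -/
noncomputable def expNegSqProd (m : ℕ) (t : ℝ) : ℝ :=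
  ∫ w : Fin m → ℝ, exp (-(t * ∏ i, w i) ^ 2 / 2) ∂Measure.pi fun _ => gaussianReal 0 1

lemma integral_cexp_I_mul_gaussianReal (a : ℝ) :
    ∫ x, Complex.exp (Complex.I * a * x) ∂gaussianReal 0 1 = (exp (-a ^ 2 / 2) : ℝ) := by
  have h := charFun_gaussianReal (μ := 0) (v := 1) a
  rw [charFun_apply_real] at h
  convert h using 2
  · ring_nf
  · push_cast; ring_nf

lemma integral_cexp_I_mul_prod_eq_expNegSqProd (m : ℕ) (t : ℝ) :
    ∫ z : Fin (m + 1) → ℝ, Complex.exp (Complex.I * t * ((∏ i, z i : ℝ) : ℂ))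
      ∂Measure.pi (fun _ => gaussianReal 0 1) = (expNegSqProd m t : ℂ) := by
  rw [integral_comp_prod_fin_succ (gaussianReal 0 1)
    fun s : ℝ => Complex.exp (Complex.I * t * s), integral_prod_symm]
  · have inner (w : Fin m → ℝ) :
        ∫ x, Complex.exp (Complex.I * t * ((x * ∏ j, w j : ℝ) : ℂ)) ∂gaussianReal 0 1 =
          (exp (-(t * ∏ j, w j) ^ 2 / 2) : ℝ) := by
      rw [← integral_cexp_I_mul_gaussianReal]
      congr 1 with x
      push_cast
      ring_nf
    simp_rw [inner]
    exact integral_ofReal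
  · refine Integrable.of_bound (by fun_prop) 1 (ae_of_all _ fun p => ?_)
    rw [mul_assoc, ← Complex.ofReal_mul, Complex.norm_exp_I_mul_ofReal]

lemma expNegSqProd_zero (t : ℝ) : expNegSqProd 0 t = exp (-t ^ 2 / 2) := by
  simp [expNegSqProd]

lemma expNegSqProd_succ (m : ℕ) (t : ℝ) :
    expNegSqProd (m + 1) t = ∫ x, expNegSqProd m (t * x) ∂gaussianReal 0 1 := by
  rw [expNegSqProd, integral_comp_prod_fin_succ (gaussianReal 0 1)
    fun s => exp (-(t * s) ^ 2 / 2), integral_prod]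
  · simp_rw [expNegSqProd, mul_assoc]
  · refine Integrable.of_bound (by fun_prop) 1 (ae_of_all _ fun p => ?_)
    rw [Real.norm_of_nonneg (exp_pos _).le, exp_le_one_iff]
    nlinarith [sq_nonneg (t * (p.1 * ∏ j, p.2 j))]

lemma expNegSqProd_nonneg (m : ℕ) (t : ℝ) : 0 ≤ expNegSqProd m t :=
  integral_nonneg fun _ => (exp_pos _).le

lemma expNegSqProd_le_one (m : ℕ) (t : ℝ) : expNegSqProd m t ≤ 1 := by
  refine (integral_mono_of_nonneg (ae_of_all _ fun _ => (exp_pos _).le) (integrable_const 1)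
    (ae_of_all _ fun w => ?_)).trans (by simp)
  exact exp_le_one_iff.mpr (by nlinarith [sq_nonneg (t * ∏ i, w i)])

lemma expNegSqProd_even (m : ℕ) : Function.Even (expNegSqProd m) := fun t => by
  simp only [expNegSqProd, neg_mul, neg_sq]

lemma continuous_expNegSqProd (m : ℕ) : Continuous (expNegSqProd m) := by
  refine continuous_of_dominated (bound := fun _ => 1) (fun t => by fun_prop)
    (fun t => ae_of_all _ fun w => ?_) (integrable_const 1) (ae_of_all _ fun w => by fun_prop)
  rw [Real.norm_of_nonneg (exp_pos _).le, exp_le_one_iff]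
  nlinarith [sq_nonneg (t * ∏ i, w i)]

lemma expNegSqProd_one (t : ℝ) : expNegSqProd 1 t = (√(1 + t ^ 2))⁻¹ := by
  rw [expNegSqProd_succ, integral_gaussianReal_eq_integral_smul one_ne_zero]
  have h (x : ℝ) :
      φ x • expNegSqProd 0 (t * x) = (√(2 * π))⁻¹ * exp (-((1 + t ^ 2) / 2) * x ^ 2) := by
    rw [expNegSqProd_zero, smul_eq_mul, gaussianPDFReal_zero_one_eq, mul_assoc, ← exp_add]
    ring_nf
  simp_rw [h]
  have hpos : 0 < 1 + t ^ 2 := by positivity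
  rw [integral_const_mul, integral_gaussian,
    show π / ((1 + t ^ 2) / 2) = 2 * π / (1 + t ^ 2) by field_simp, sqrt_div' _ hpos.le]
  have : 0 < √(2 * π) := by positivity
  field_simp

lemma one_le_log_two_add {t : ℝ} (ht : 1 ≤ t) : 1 ≤ log (2 + t) := by
  rw [le_log_iff_exp_le (by linarith)]
  linarith [exp_one_lt_d9]

lemma log_two_add_mul_le {t x : ℝ} (ht : 1 ≤ t) (hx : 1 ≤ x) :
    log (2 + t * x) ≤ log (2 + t) * x := by
  have hL := one_le_log_two_add ht
  calc log (2 + t * x) ≤ log ((2 + t) * x) := log_le_log (by positivity) (by nlinarith)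
    _ = log (2 + t) + log x := log_mul (by positivity) (by positivity)
    _ ≤ log (2 + t) + log (2 + t) * (x - 1) := by
        gcongr
        nlinarith [log_le_sub_one_of_pos (show 0 < x by linarith)]
    _ = log (2 + t) * x := by ring

lemma integral_log_mul_pow_mul_inv (m : ℕ) {t : ℝ} (ht : 1 ≤ t) :
    ∫ x in t⁻¹..1, log (t * x) ^ m * x⁻¹ = log t ^ (m + 1) / (m + 1) := by
  have ht0 : 0 < t := by linarith
  have hpos {x : ℝ} (hx : x ∈ uIcc t⁻¹ 1) : 0 < x := by
    rw [uIcc_of_le (inv_le_one_of_one_le₀ ht)] at hx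
    exact (inv_pos.mpr ht0).trans_le hx.1
  have hderiv {x : ℝ} (hx : x ∈ uIcc t⁻¹ 1) : HasDerivAt
      (fun x => log (t * x) ^ (m + 1) / (m + 1)) (log (t * x) ^ m * x⁻¹) x := by
    have hlog := ((hasDerivAt_id' x).const_mul t).log (mul_pos ht0 (hpos hx)).ne'
    refine ((hlog.fun_pow (m + 1)).div_const ((m : ℝ) + 1)).congr_deriv ?_
    have := (hpos hx).ne'
    rw [Nat.add_sub_cancel]
    push_cast
    field_simp
  rw [intervalIntegral.integral_eq_sub_of_hasDerivAt (fun x hx => hderiv hx)]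
  · simp [mul_inv_cancel₀ ht0.ne']
  · refine ContinuousOn.intervalIntegrable ?_
    exact ((continuousOn_const.mul continuousOn_id).log fun x hx =>
      (mul_pos ht0 (hpos hx)).ne').pow m
        |>.mul (continuousOn_inv₀.mono fun x hx => (hpos hx).ne')

section ScaleMixture

variable {g : ℝ → ℝ} {m : ℕ} {t c C : ℝ}

lemma integrable_gaussianPDFReal_mul_comp (hg : Measurable g) (hg0 : ∀ s, 0 ≤ g s)
    (hg1 : ∀ s, g s ≤ 1) (t : ℝ) : Integrable fun x => φ x * g (t * x) := by
  refine (integrable_gaussianPDFReal 0 1).mono' (by fun_prop) (ae_of_all _ fun x => ?_)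
  rw [Real.norm_of_nonneg (mul_nonneg (gaussianPDFReal_nonneg 0 1 x) (hg0 _))]
  exact mul_le_of_le_one_right (gaussianPDFReal_nonneg 0 1 x) (hg1 _)

lemma le_integral_comp_mul_gaussianReal (hg : Measurable g) (hg0 : ∀ s, 0 ≤ g s)
    (hg1 : ∀ s, g s ≤ 1) (hc : 0 ≤ c) (hlow : ∀ s, 1 ≤ s → c * s⁻¹ * log s ^ m ≤ g s)
    (ht : 1 ≤ t) :
    φ 1 * c / (m + 1) * t⁻¹ * log t ^ (m + 1) ≤ ∫ x, g (t * x) ∂gaussianReal 0 1 := by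
  have ht0 : 0 < t := by linarith
  have hint := integrable_gaussianPDFReal_mul_comp hg hg0 hg1 t
  have hmem {x : ℝ} (hx : x ∈ Ioc t⁻¹ 1) : 0 < x ∧ 1 ≤ t * x :=
    ⟨(inv_pos.mpr ht0).trans hx.1,
      by simpa [ht0.ne'] using mul_le_mul_of_nonneg_left hx.1.le ht0.le⟩
  rw [integral_gaussianReal_eq_integral_smul one_ne_zero]
  simp_rw [smul_eq_mul]
  calc φ 1 * c / (m + 1) * t⁻¹ * log t ^ (m + 1)
      = ∫ x in Ioc t⁻¹ 1, φ 1 * c * t⁻¹ * (log (t * x) ^ m * x⁻¹) := by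
        rw [integral_const_mul, ← intervalIntegral.integral_of_le (inv_le_one_of_one_le₀ ht),
          integral_log_mul_pow_mul_inv m ht]
        ring
    _ ≤ ∫ x in Ioc t⁻¹ 1, φ x * g (t * x) := by
        refine integral_mono_of_nonneg ?_ hint.integrableOn ?_ <;>
          filter_upwards [ae_restrict_mem measurableSet_Ioc] with x hx <;>
          obtain ⟨hx0, htx⟩ := hmem hx
        · have := gaussianPDFReal_nonneg 0 1 1
          have := log_nonneg htx
          positivity
        · calc φ 1 * c * t⁻¹ * (log (t * x) ^ m * x⁻¹)
              = φ 1 * (c * (t * x)⁻¹ * log (t * x) ^ m) := by rw [mul_inv]; ring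
            _ ≤ φ x * g (t * x) := by
              refine mul_le_mul (gaussianPDFReal_one_le_of_abs_le_one ?_) (hlow _ htx)
                (by have := log_nonneg htx; positivity) (gaussianPDFReal_nonneg 0 1 x)
              rw [abs_of_pos hx0]
              exact hx.2
    _ ≤ ∫ x, φ x * g (t * x) :=
        setIntegral_le_integral hint
          (ae_of_all _ fun x => mul_nonneg (gaussianPDFReal_nonneg 0 1 x) (hg0 _))

lemma setIntegral_Ioc_zero_inv_gaussianPDFReal_mul_le (hg0 : ∀ s, 0 ≤ g s)
    (hg1 : ∀ s, g s ≤ 1) (ht : 0 < t) :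
    ∫ x in Ioc 0 t⁻¹, φ x * g (t * x) ≤ 1 / 2 * t⁻¹ := by
  have h := norm_setIntegral_le_of_norm_le_const (μ := volume) (f := fun x => φ x * g (t * x))
    (s := Ioc 0 t⁻¹) (C := 1 / 2) measure_Ioc_lt_top fun x _ => by
      rw [Real.norm_of_nonneg (mul_nonneg (gaussianPDFReal_nonneg 0 1 x) (hg0 _))]
      exact (mul_le_of_le_one_right (gaussianPDFReal_nonneg 0 1 x) (hg1 _)).trans
        (gaussianPDFReal_zero_one_le_half x)
  rw [Real.volume_real_Ioc_of_le (inv_pos.mpr ht).le, sub_zero] at h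
  exact (le_abs_self _).trans h

lemma comp_mul_le_of_mem_Ioc (hC : 0 ≤ C)
    (hup : ∀ s, 1 ≤ s → g s ≤ C * s⁻¹ * log (2 + s) ^ m) (ht : 1 ≤ t) {x : ℝ}
    (hx : x ∈ Ioc t⁻¹ 1) : g (t * x) ≤ C * t⁻¹ * log (2 + t) ^ m * x⁻¹ := by
  have ht0 : 0 < t := by linarith
  have hx0 : 0 < x := (inv_pos.mpr ht0).trans hx.1
  have htx : 1 ≤ t * x := by simpa [ht0.ne'] using mul_le_mul_of_nonneg_left hx.1.le ht0.le
  calc g (t * x) ≤ C * (t * x)⁻¹ * log (2 + t * x) ^ m := hup _ htx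
    _ ≤ C * (t * x)⁻¹ * log (2 + t) ^ m := by
        have := log_nonneg (show 1 ≤ 2 + t * x by linarith)
        gcongr
        exact mul_le_of_le_one_right ht0.le hx.2
    _ = C * t⁻¹ * log (2 + t) ^ m * x⁻¹ := by rw [mul_inv]; ring

lemma comp_mul_le_of_one_le (hC : 0 ≤ C)
    (hup : ∀ s, 1 ≤ s → g s ≤ C * s⁻¹ * log (2 + s) ^ m) (ht : 1 ≤ t) {x : ℝ}
    (hx : 1 ≤ x) : g (t * x) ≤ C * t⁻¹ * log (2 + t) ^ m * x ^ m := by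
  have ht0 : 0 < t := by linarith
  have htx : t ≤ t * x := le_mul_of_one_le_right ht0.le hx
  calc g (t * x) ≤ C * (t * x)⁻¹ * log (2 + t * x) ^ m := hup _ (ht.trans htx)
    _ ≤ C * t⁻¹ * (log (2 + t) * x) ^ m := by
        have := log_nonneg (show 1 ≤ 2 + t * x by nlinarith)
        gcongr
        exact log_two_add_mul_le ht hx
    _ = C * t⁻¹ * log (2 + t) ^ m * x ^ m := by ring

lemma setIntegral_Ioc_inv_one_gaussianPDFReal_mul_le (hg0 : ∀ s, 0 ≤ g s) (hC : 0 ≤ C)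
    (hup : ∀ s, 1 ≤ s → g s ≤ C * s⁻¹ * log (2 + s) ^ m) (ht : 1 ≤ t) :
    ∫ x in Ioc t⁻¹ 1, φ x * g (t * x) ≤ 1 / 2 * (C * t⁻¹ * log (2 + t) ^ m) * log t := by
  have ht0 : 0 < t := by linarith
  have hinv : t⁻¹ ≤ 1 := inv_le_one_of_one_le₀ ht
  have hint : IntegrableOn (fun x : ℝ => x⁻¹) (Ioc t⁻¹ 1) := by
    refine (intervalIntegral.intervalIntegrable_inv (fun x hx => ?_) continuousOn_id).1
    rw [uIcc_of_le hinv] at hx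
    exact ((inv_pos.mpr ht0).trans_le hx.1).ne'
  calc ∫ x in Ioc t⁻¹ 1, φ x * g (t * x)
      ≤ ∫ x in Ioc t⁻¹ 1, 1 / 2 * (C * t⁻¹ * log (2 + t) ^ m) * x⁻¹ := by
        refine integral_mono_of_nonneg
          (ae_of_all _ fun x => mul_nonneg (gaussianPDFReal_nonneg 0 1 x) (hg0 _))
          (hint.const_mul _) ?_
        filter_upwards [ae_restrict_mem measurableSet_Ioc] with x hx
        calc φ x * g (t * x) ≤ 1 / 2 * (C * t⁻¹ * log (2 + t) ^ m * x⁻¹) :=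
              mul_le_mul (gaussianPDFReal_zero_one_le_half x)
                (comp_mul_le_of_mem_Ioc hC hup ht hx) (hg0 _) (by norm_num)
          _ = 1 / 2 * (C * t⁻¹ * log (2 + t) ^ m) * x⁻¹ := by ring
    _ = 1 / 2 * (C * t⁻¹ * log (2 + t) ^ m) * log t := by
        rw [integral_const_mul, ← intervalIntegral.integral_of_le hinv,
          integral_inv_of_pos (inv_pos.mpr ht0) one_pos, div_inv_eq_mul, one_mul]

lemma setIntegral_Ioi_one_gaussianPDFReal_mul_le (hg0 : ∀ s, 0 ≤ g s) (hC : 0 ≤ C)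
    (hup : ∀ s, 1 ≤ s → g s ≤ C * s⁻¹ * log (2 + s) ^ m) (ht : 1 ≤ t) :
    ∫ x in Ioi 1, φ x * g (t * x) ≤
      C * t⁻¹ * log (2 + t) ^ m * ∫ x in Ioi 1, x ^ m * φ x := by
  rw [← integral_const_mul]
  refine integral_mono_of_nonneg
    (ae_of_all _ fun x => mul_nonneg (gaussianPDFReal_nonneg 0 1 x) (hg0 _))
    ((integrableOn_pow_mul_gaussianPDFReal m).mono_set (Ioi_subset_Ioi zero_le_one)
      |>.const_mul _) ?_
  filter_upwards [ae_restrict_mem measurableSet_Ioi] with x hx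
  calc φ x * g (t * x) ≤ φ x * (C * t⁻¹ * log (2 + t) ^ m * x ^ m) :=
        mul_le_mul_of_nonneg_left (comp_mul_le_of_one_le hC hup ht (le_of_lt hx))
          (gaussianPDFReal_nonneg 0 1 x)
    _ = C * t⁻¹ * log (2 + t) ^ m * (x ^ m * φ x) := by ring

lemma exists_integral_comp_mul_gaussianReal_le (hg : Measurable g) (hg0 : ∀ s, 0 ≤ g s)
    (hg1 : ∀ s, g s ≤ 1) (heven : Function.Even g) (hC : 0 ≤ C)
    (hup : ∀ s, 1 ≤ s → g s ≤ C * s⁻¹ * log (2 + s) ^ m) :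
    ∃ C' > 0, ∀ t, 1 ≤ t →
      ∫ x, g (t * x) ∂gaussianReal 0 1 ≤ C' * t⁻¹ * log (2 + t) ^ (m + 1) := by
  set A := ∫ x in Ioi 1, x ^ m * φ x
  have hA : 0 ≤ A := setIntegral_nonneg measurableSet_Ioi fun x hx =>
    mul_nonneg (pow_nonneg (zero_le_one.trans (le_of_lt hx)) m) (gaussianPDFReal_nonneg 0 1 x)
  refine ⟨1 + C + 2 * C * A, by positivity, fun t ht => ?_⟩
  have ht0 : 0 < t := by linarith
  have hint (s : Set ℝ) : IntegrableOn (fun x => φ x * g (t * x)) s :=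
    (integrable_gaussianPDFReal_mul_comp hg hg0 hg1 t).integrableOn
  have hsplit : ∫ x in Ioi 0, φ x * g (t * x) = (∫ x in Ioc 0 t⁻¹, φ x * g (t * x)) +
      (∫ x in Ioc t⁻¹ 1, φ x * g (t * x)) + ∫ x in Ioi 1, φ x * g (t * x) := by
    rw [← Ioc_union_Ioi_eq_Ioi zero_le_one,
      setIntegral_union (Ioc_disjoint_Ioi le_rfl) measurableSet_Ioi (hint _) (hint _),
      ← Ioc_union_Ioc_eq_Ioc (inv_pos.mpr ht0).le (inv_le_one_of_one_le₀ ht),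
      setIntegral_union (Ioc_disjoint_Ioc_of_le le_rfl) measurableSet_Ioc (hint _) (hint _)]
  have hsymm (x : ℝ) : g (t * |x|) = g (t * x) := by
    rcases abs_choice x with h | h <;> rw [h]
    rw [mul_neg, heven]
  have h1 := setIntegral_Ioc_zero_inv_gaussianPDFReal_mul_le hg0 hg1 ht0
  have h2 := setIntegral_Ioc_inv_one_gaussianPDFReal_mul_le hg0 hC hup ht
  have h3 := setIntegral_Ioi_one_gaussianPDFReal_mul_le hg0 hC hup ht
  have hL : 1 ≤ log (2 + t) := one_le_log_two_add ht
  have hlogt : log t ≤ log (2 + t) := log_le_log ht0 (by linarith)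
  have hu : 0 ≤ C * (t⁻¹ * log (2 + t) ^ m) := by positivity
  have ha : t⁻¹ ≤ t⁻¹ * log (2 + t) ^ (m + 1) :=
    le_mul_of_one_le_right (inv_pos.mpr ht0).le (one_le_pow₀ hL)
  have hb := mul_le_mul_of_nonneg_left hlogt hu
  have hc := le_mul_of_one_le_right (mul_nonneg hu hA) hL
  rw [integral_gaussianReal_eq_two_mul_setIntegral_Ioi (f := fun x => g (t * x)) hsymm, hsplit,
    pow_succ]
  rw [pow_succ] at ha
  linarith

end ScaleMixture

lemma exists_le_expNegSqProd (m : ℕ) :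
    ∃ c > 0, ∀ t, 1 ≤ t → c * t⁻¹ * log t ^ m ≤ expNegSqProd (m + 1) t := by
  induction m with
  | zero =>
    refine ⟨1 / 2, by norm_num, fun t ht => ?_⟩
    have hsqrt : √(1 + t ^ 2) ≤ 2 * t := Real.sqrt_le_iff.mpr ⟨by linarith, by nlinarith⟩
    rw [expNegSqProd_one, pow_zero, mul_one, one_div, ← mul_inv]
    exact inv_anti₀ (by positivity) hsqrt
  | succ m ih =>
    obtain ⟨c, hc, hlow⟩ := ih
    refine ⟨φ 1 * c / (m + 1), by have := gaussianPDFReal_pos 0 1 1 one_ne_zero; positivity,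
      fun t ht => ?_⟩
    rw [expNegSqProd_succ]
    exact le_integral_comp_mul_gaussianReal (continuous_expNegSqProd _).measurable
      (expNegSqProd_nonneg _) (expNegSqProd_le_one _) hc.le hlow ht

lemma exists_expNegSqProd_le (m : ℕ) :
    ∃ C > 0, ∀ t, 1 ≤ t → expNegSqProd (m + 1) t ≤ C * t⁻¹ * log (2 + t) ^ m := by
  induction m with
  | zero =>
    refine ⟨1, one_pos, fun t ht => ?_⟩
    have hsqrt : t ≤ √(1 + t ^ 2) := Real.le_sqrt_of_sq_le (by linarith)
    rw [expNegSqProd_one, pow_zero, mul_one, one_mul]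
    exact inv_anti₀ (by linarith) hsqrt
  | succ m ih =>
    obtain ⟨C, hC, hup⟩ := ih
    obtain ⟨C', hC', h⟩ := exists_integral_comp_mul_gaussianReal_le
      (continuous_expNegSqProd _).measurable (expNegSqProd_nonneg _) (expNegSqProd_le_one _)
      (expNegSqProd_even _) hC.le hup
    exact ⟨C', hC', fun t ht => (expNegSqProd_succ _ _).trans_le (h t ht)⟩

end GaussianProduct

/-- (Theorem 4.) Let `Z` be a standard Gaussian random vector in `ℝᵏ`, `k ≥ 2`,
and `f₁(x) = x⁽¹⁾ ⋯ x⁽ᵏ⁾`. Then there are constants `l_k, L_k > 0` depending only on `k` such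
that for all `|t| ≥ 1`,
`l_k |t|⁻¹ lnᵏ⁻²|t| ≤ |E exp(i t f₁(Z))| ≤ L_k |t|⁻¹ lnᵏ⁻²(2 + |t|)`. -/
theorem stmt_3 (k : ℕ) (hk : 2 ≤ k) :
    ∃ l L : ℝ, 0 < l ∧ 0 < L ∧
      ∀ t : ℝ, 1 ≤ |t| →
        l * |t|⁻¹ * Real.log |t| ^ (k - 2) ≤
            ‖∫ z : Fin k → ℝ, Complex.exp (Complex.I * (t : ℂ) * ((∏ i, z i : ℝ) : ℂ))
              ∂(Measure.pi fun _ : Fin k => gaussianReal 0 1)‖ ∧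
          ‖∫ z : Fin k → ℝ, Complex.exp (Complex.I * (t : ℂ) * ((∏ i, z i : ℝ) : ℂ))
              ∂(Measure.pi fun _ : Fin k => gaussianReal 0 1)‖ ≤
            L * |t|⁻¹ * Real.log (2 + |t|) ^ (k - 2) := by
  obtain ⟨m, rfl⟩ : ∃ m, k = m + 2 := ⟨k - 2, by omega⟩
  obtain ⟨c, hc, hlow⟩ := GaussianProduct.exists_le_expNegSqProd m
  obtain ⟨C, hC, hup⟩ := GaussianProduct.exists_expNegSqProd_le m
  have hnorm (t : ℝ) :
      ‖∫ z : Fin (m + 2) → ℝ, Complex.exp (Complex.I * t * ((∏ i, z i : ℝ) : ℂ))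
        ∂(Measure.pi fun _ => gaussianReal 0 1)‖ = GaussianProduct.expNegSqProd (m + 1) |t| := by
    rw [GaussianProduct.integral_cexp_I_mul_prod_eq_expNegSqProd, Complex.norm_real,
      Real.norm_of_nonneg (GaussianProduct.expNegSqProd_nonneg _ _)]
    rcases abs_choice t with h | h <;> rw [h]
    exact (GaussianProduct.expNegSqProd_even _ t).symm
  refine ⟨c, C, hc, hC, fun t ht => ?_⟩
  rw [hnorm, Nat.add_sub_cancel]
  exact ⟨hlow _ ht, hup _ ht⟩
end

section
/- Let X be a real random variable with |X| ≤ 1 and characteristic function g_X, with φ_X(T) = ∫_{-T}^{T} |g_X(t)| dt. Suppose there exist a nondecreasing positive function φ(t) on (0,∞) and a constant ε with 0 ≤ ε < 1 such that φ_X(bt) ≤ b^ε φ(t) for all t ≥ 1 and b ≥ 1. Then the distribution function of X is a Lipschitz function of order 1 - ε, i.e., there exists a constant C such that |F_X(x) - F_X(y)| ≤ C |x - y|^{1-ε} for all real x, y. -/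
/-!
Esseen's concentration inequality does the work. Integrating the Fejér weight `(1 - |t|/T)`
over `[-T, T]` against the characteristic function of `X - a` gives `E[T sinc² (T (X - a) / 2)]`,
and this nonnegative kernel is at least `T / 2` where `|X - a| ≤ 2 / T`. Hence
`P(|X - a| ≤ r) ≤ r ∫_{-2/r}^{2/r} |g_X|`. For `y ≤ x` with `r = x - y < 1`, the growth
hypothesis at `t = 1`, `b = 2 / r` bounds this by `2^ε φ(1) r^{1-ε}`; for `r ≥ 1` the bound `1` suffices.
-/

open MeasureTheory ProbabilityTheory Filter Set

open Real

lemma Real.five_sixths_le_sinc {u : ℝ} (hu : |u| ≤ 1) : 5 / 6 ≤ sinc u := by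
  wlog hu0 : 0 ≤ u generalizing u
  · simpa [sinc_neg] using this (u := -u) (by rwa [abs_neg]) (by linarith)
  rcases hu0.eq_or_lt with rfl | hpos
  · norm_num [sinc_zero]
  rw [abs_of_pos hpos] at hu
  rw [sinc_of_ne_zero hpos.ne', le_div_iff₀ hpos]
  nlinarith [sin_gt_sub_cube hpos, pow_le_one₀ hu0 hu (n := 2)]

lemma intervalIntegral_neg_self_eq_two_mul_of_even {f : ℝ → ℝ} (hf : Continuous f)
    (heven : ∀ t, f (-t) = f t) (T : ℝ) :
    ∫ t in (-T)..T, f t = 2 * ∫ t in (0 : ℝ)..T, f t := by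
  rw [← intervalIntegral.integral_add_adjacent_intervals (b := 0)
    (hf.intervalIntegrable _ _) (hf.intervalIntegrable _ _)]
  have hneg : ∫ t in (-T)..0, f t = ∫ t in (0 : ℝ)..T, f t := by
    simpa [heven] using (intervalIntegral.integral_comp_neg (a := 0) (b := T) f).symm
  rw [hneg, two_mul]

lemma integral_zero_one_sub_div_mul_cos {T : ℝ} (hT : 0 < T) (x : ℝ) :
    ∫ t in (0 : ℝ)..T, (1 - t / T) * cos (t * x) = T / 2 * sinc (T * x / 2) ^ 2 := by
  rcases eq_or_ne x 0 with rfl | hx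
  · simp only [mul_zero, zero_div, cos_zero, mul_one, sinc_zero, one_pow]
    rw [intervalIntegral.integral_sub intervalIntegrable_const
      (intervalIntegral.intervalIntegrable_id.div_const T),
      intervalIntegral.integral_div, integral_id, intervalIntegral.integral_const, smul_eq_mul]
    field_simp
    ring
  have hderiv : ∀ t ∈ uIcc 0 T, HasDerivAt
      (fun t => (1 - t / T) * (sin (t * x) / x) - cos (t * x) / (T * x ^ 2))
      ((1 - t / T) * cos (t * x)) t := by
    intro t _
    have hlin : HasDerivAt (fun t => t * x) x t := hasDerivAt_mul_const x
    have := (((hasDerivAt_id t).div_const T).const_sub 1).mul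
      (((hasDerivAt_sin _).comp t hlin).div_const x) |>.sub
      (((hasDerivAt_cos _).comp t hlin).div_const (T * x ^ 2))
    refine this.congr_deriv ?_
    simp only [Function.comp_apply, id]
    field_simp
    ring
  rw [intervalIntegral.integral_eq_sub_of_hasDerivAt hderiv
    (by apply Continuous.intervalIntegrable; fun_prop),
    sinc_of_ne_zero (by positivity)]
  have hcos : cos (T * x) = 1 - 2 * sin (T * x / 2) ^ 2 := by
    have := cos_sq_add_sin_sq (T * x / 2)
    rw [show T * x = 2 * (T * x / 2) by ring, cos_two_mul', mul_div_cancel_left₀ _ two_ne_zero]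
    linarith
  simp only [div_self hT.ne', sub_self, zero_mul, zero_div, sin_zero, cos_zero]
  rw [hcos]
  field_simp
  ring

lemma integral_one_sub_abs_div_mul_cos {T : ℝ} (hT : 0 < T) (x : ℝ) :
    ∫ t in (-T)..T, (1 - |t| / T) * cos (t * x) = T * sinc (T * x / 2) ^ 2 := by
  rw [intervalIntegral_neg_self_eq_two_mul_of_even (by fun_prop) (fun t => by simp [cos_neg]),
    intervalIntegral.integral_congr (g := fun t => (1 - t / T) * cos (t * x)),
    integral_zero_one_sub_div_mul_cos hT x]
  · ring
  · intro t ht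
    rw [uIcc_of_le hT.le] at ht
    simp [abs_of_nonneg ht.1]

section CharFun

variable {μ : Measure ℝ}

open Complex in
lemma re_charFun_eq_integral_cos [IsFiniteMeasure μ] (t : ℝ) :
    (charFun μ t).re = ∫ x, Real.cos (t * x) ∂μ := by
  have hint : Integrable (fun x : ℝ => cexp (t * x * I)) μ :=
    Integrable.of_bound (by fun_prop) 1
      (ae_of_all _ fun x => by rw [← ofReal_mul, norm_exp_ofReal_mul_I])
  rw [charFun_apply_real, ← reCLM_apply, ← ContinuousLinearMap.integral_comp_comm _ hint]
  norm_cast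
  simp only [reCLM_apply, exp_ofReal_mul_I_re]

lemma integral_sinc_sq_eq_integral_re_charFun [IsFiniteMeasure μ] {T : ℝ} (hT : 0 < T) :
    ∫ x, T * sinc (T * x / 2) ^ 2 ∂μ = ∫ t in (-T)..T, (1 - |t| / T) * (charFun μ t).re := by
  simp_rw [← integral_one_sub_abs_div_mul_cos hT, re_charFun_eq_integral_cos,
    ← integral_const_mul]
  refine (intervalIntegral_integral_swap ?_).symm
  have hw : Integrable (fun t => 1 - |t| / T) (volume.restrict (uIoc (-T) T)) :=
    intervalIntegrable_iff.mp
      ((by fun_prop : Continuous fun t => 1 - |t| / T).intervalIntegrable _ _)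
  refine (hw.norm.comp_fst μ).mono' (by fun_prop) (ae_of_all _ fun p => ?_)
  rw [Function.uncurry_def, norm_mul]
  exact mul_le_of_le_one_right (norm_nonneg _) (abs_cos_le_one _)

lemma half_mul_measureReal_closedBall_le_integral_sinc_sq [IsProbabilityMeasure μ] {T : ℝ}
    (hT : 0 < T) :
    T / 2 * μ.real (Metric.closedBall 0 (2 / T)) ≤ ∫ x, T * sinc (T * x / 2) ^ 2 ∂μ := by
  rw [mul_comm, ← smul_eq_mul, ← integral_indicator_const _ measurableSet_closedBall]
  refine integral_mono ((integrable_const _).indicator measurableSet_closedBall) ?_ fun x => ?_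
  · exact Integrable.of_bound (by fun_prop) T (ae_of_all _ fun x => by
      rw [norm_mul, norm_pow, Real.norm_of_nonneg hT.le, Real.norm_eq_abs]
      exact mul_le_of_le_one_right hT.le (pow_le_one₀ (abs_nonneg _) (abs_sinc_le_one _)))
  by_cases hx : x ∈ Metric.closedBall 0 (2 / T)
  · rw [indicator_of_mem hx]
    have hx' : |T * x / 2| ≤ 1 := by
      rw [Metric.mem_closedBall, dist_zero_right, Real.norm_eq_abs, le_div_iff₀ hT] at hx
      rw [abs_div, abs_mul, abs_of_pos hT, abs_two]
      linarith
    have : 1 / 2 ≤ sinc (T * x / 2) ^ 2 := by nlinarith [five_sixths_le_sinc hx']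
    nlinarith
  · rw [indicator_of_notMem hx]
    positivity

lemma integral_one_sub_abs_div_mul_re_charFun_le [IsFiniteMeasure μ] {T : ℝ} (hT : 0 < T) :
    ∫ t in (-T)..T, (1 - |t| / T) * (charFun μ t).re ≤ ∫ t in (-T)..T, ‖charFun μ t‖ := by
  refine intervalIntegral.integral_mono_on (by linarith)
    ((by fun_prop : Continuous fun t => (1 - |t| / T) * (charFun μ t).re).intervalIntegrable _ _)
    intervalIntegrable_charFun.norm fun t ht => ?_
  have h0 : 0 ≤ 1 - |t| / T := by rw [sub_nonneg, div_le_one hT]; exact abs_le.mpr ht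
  have h1 : 1 - |t| / T ≤ 1 := by linarith [div_nonneg (abs_nonneg t) hT.le]
  calc (1 - |t| / T) * (charFun μ t).re ≤ (1 - |t| / T) * ‖charFun μ t‖ :=
        mul_le_mul_of_nonneg_left (Complex.re_le_norm _) h0
    _ ≤ ‖charFun μ t‖ := mul_le_of_le_one_left (norm_nonneg _) h1

lemma measureReal_closedBall_zero_le_integral_norm_charFun [IsProbabilityMeasure μ] {r : ℝ}
    (hr : 0 < r) :
    μ.real (Metric.closedBall 0 r) ≤ r * ∫ t in (-(2 / r))..(2 / r), ‖charFun μ t‖ := by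
  have hT : 0 < 2 / r := by positivity
  have key := (half_mul_measureReal_closedBall_le_integral_sinc_sq (μ := μ) hT).trans
    ((integral_sinc_sq_eq_integral_re_charFun hT).trans_le
      (integral_one_sub_abs_div_mul_re_charFun_le hT))
  rw [div_div_cancel₀ two_ne_zero] at key
  calc μ.real (Metric.closedBall 0 r) = r * (2 / r / 2 * μ.real (Metric.closedBall 0 r)) := by
        field_simp
    _ ≤ r * ∫ t in (-(2 / r))..(2 / r), ‖charFun μ t‖ := by gcongr

lemma measureReal_closedBall_le_integral_norm_charFun [IsProbabilityMeasure μ] (a : ℝ) {r : ℝ}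
    (hr : 0 < r) :
    μ.real (Metric.closedBall a r) ≤ r * ∫ t in (-(2 / r))..(2 / r), ‖charFun μ t‖ := by
  have : IsProbabilityMeasure (μ.map (· + -a)) := Measure.isProbabilityMeasure_map (by fun_prop)
  have hshift := measureReal_closedBall_zero_le_integral_norm_charFun (μ := μ.map (· + -a)) hr
  rw [map_measureReal_apply (by fun_prop) measurableSet_closedBall,
    show (· + -a) ⁻¹' Metric.closedBall 0 r = Metric.closedBall a r by
      ext x; simp [Real.dist_eq, ← sub_eq_add_neg]] at hshift
  simpa [charFun_map_add_const, ← neg_mul, ← Complex.ofReal_neg, ← Complex.ofReal_mul,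
    Complex.norm_exp_ofReal_mul_I] using hshift

variable [IsProbabilityMeasure μ] {ε K : ℝ}

lemma measureReal_Iic_add_sub_le_of_integral_norm_charFun_le (hε : ε ≤ 1)
    (hK : ∀ b, 1 ≤ b → ∫ t in (-b)..b, ‖charFun μ t‖ ≤ b ^ ε * K) (y : ℝ) {h : ℝ} (hh : 0 ≤ h) :
    μ.real (Iic (y + h)) - μ.real (Iic y) ≤ max 1 (2 ^ ε * K) * h ^ (1 - ε) := by
  rcases hh.eq_or_lt with rfl | hpos
  · rw [add_zero, sub_self]
    positivity
  have hcover : μ.real (Iic (y + h)) ≤ μ.real (Iic y) + μ.real (Metric.closedBall y h) := by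
    refine (measureReal_mono fun z hz => ?_).trans (measureReal_union_le _ _)
    rcases le_or_gt z y with hzy | hyz
    · exact Or.inl hzy
    · right
      rw [Metric.mem_closedBall, Real.dist_eq, abs_le]
      constructor <;> linarith [mem_Iic.mp hz]
  rcases le_or_gt 1 h with h1 | h1
  · calc μ.real (Iic (y + h)) - μ.real (Iic y) ≤ 1 * 1 := by
          linarith [measureReal_le_one (μ := μ) (s := Iic (y + h)),
            measureReal_nonneg (μ := μ) (s := Iic y)]
      _ ≤ max 1 (2 ^ ε * K) * h ^ (1 - ε) := by
          gcongr
          · exact le_max_left _ _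
          · exact Real.one_le_rpow h1 (by linarith)
  · have hb : 1 ≤ 2 / h := by rw [le_div_iff₀ hpos]; linarith
    calc μ.real (Iic (y + h)) - μ.real (Iic y) ≤ μ.real (Metric.closedBall y h) := by linarith
      _ ≤ h * ((2 / h) ^ ε * K) :=
          (measureReal_closedBall_le_integral_norm_charFun y hpos).trans
            (by gcongr; simpa using hK _ hb)
      _ = 2 ^ ε * K * h ^ (1 - ε) := by
          rw [Real.div_rpow zero_le_two hpos.le, Real.rpow_sub hpos, Real.rpow_one]
          field_simp
      _ ≤ max 1 (2 ^ ε * K) * h ^ (1 - ε) := by gcongr; exact le_max_right _ _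

lemma abs_measureReal_Iic_sub_le_of_integral_norm_charFun_le (hε : ε ≤ 1)
    (hK : ∀ b, 1 ≤ b → ∫ t in (-b)..b, ‖charFun μ t‖ ≤ b ^ ε * K) (x y : ℝ) :
    |μ.real (Iic x) - μ.real (Iic y)| ≤ max 1 (2 ^ ε * K) * |x - y| ^ (1 - ε) := by
  wlog hyx : y ≤ x generalizing x y
  · rw [abs_sub_comm, abs_sub_comm x]
    exact this y x (le_of_not_ge hyx)
  rw [abs_of_nonneg (sub_nonneg.mpr (measureReal_mono (Iic_subset_Iic.mpr hyx))),
    abs_of_nonneg (sub_nonneg.mpr hyx)]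
  simpa using
    measureReal_Iic_add_sub_le_of_integral_norm_charFun_le hε hK y (sub_nonneg.mpr hyx)

end CharFun

theorem stmt_6_general {Ω : Type*} [MeasurableSpace Ω] (P : Measure Ω) [IsProbabilityMeasure P]
    (X : Ω → ℝ) (hXm : Measurable X)
    (φ : ℝ → ℝ)
    (ε : ℝ) (hε1 : ε < 1)
    (hφX : ∀ t : ℝ, 1 ≤ t → ∀ b : ℝ, 1 ≤ b →
      (∫ s in (-(b * t))..(b * t), ‖∫ ω, Complex.exp (Complex.I * (s : ℂ) * (X ω : ℂ)) ∂P‖) ≤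
        b ^ ε * φ t) :
    ∃ C : ℝ, ∀ x y : ℝ,
      |(P (X ⁻¹' Set.Iic x)).toReal - (P (X ⁻¹' Set.Iic y)).toReal| ≤
        C * |x - y| ^ (1 - ε) := by
  have : IsProbabilityMeasure (P.map X) := Measure.isProbabilityMeasure_map hXm.aemeasurable
  have hcdf (x : ℝ) : (P (X ⁻¹' Iic x)).toReal = (P.map X).real (Iic x) :=
    (map_measureReal_apply hXm measurableSet_Iic).symm
  have hcharFun (s : ℝ) :
      ∫ ω, Complex.exp (Complex.I * s * X ω) ∂P = charFun (P.map X) s := by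
    rw [charFun_apply_real, integral_map hXm.aemeasurable (by fun_prop)]
    simp only [mul_comm Complex.I, mul_right_comm _ Complex.I]
  refine ⟨max 1 (2 ^ ε * φ 1), fun x y => ?_⟩
  simp only [hcdf]
  refine abs_measureReal_Iic_sub_le_of_integral_norm_charFun_le hε1.le (fun b hb => ?_) x y
  simpa [hcharFun] using hφX 1 le_rfl b hb

/-- (Remark 2.) Let `X` be a random variable with `|X| ≤ 1`, characteristic
function `g_X` and `φ_X(T) = ∫_{-T}^T |g_X(t)| dt`. If there is a nondecreasing positive
function `φ` on `(0,∞)` and `0 ≤ ε < 1` with `φ_X(bt) ≤ b^ε φ(t)` for all `t ≥ 1`, `b ≥ 1`,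
then the distribution function of `X` is Lipschitz of order `1 - ε`: there is `C` with
`|F_X(x) - F_X(y)| ≤ C |x - y|^{1-ε}` for all `x, y`. -/
theorem stmt_6 {Ω : Type*} [MeasurableSpace Ω] (P : Measure Ω) [IsProbabilityMeasure P]
    (X : Ω → ℝ) (hXm : Measurable X) (hX1 : ∀ᵐ ω ∂P, |X ω| ≤ 1)
    (φ : ℝ → ℝ) (hφpos : ∀ t, 0 < t → 0 < φ t) (hφmono : MonotoneOn φ (Set.Ioi 0))
    (ε : ℝ) (hε0 : 0 ≤ ε) (hε1 : ε < 1)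
    (hφX : ∀ t : ℝ, 1 ≤ t → ∀ b : ℝ, 1 ≤ b →
      (∫ s in (-(b * t))..(b * t), ‖∫ ω, Complex.exp (Complex.I * (s : ℂ) * (X ω : ℂ)) ∂P‖) ≤
        b ^ ε * φ t) :
    ∃ C : ℝ, ∀ x y : ℝ,
      |(P (X ⁻¹' Set.Iic x)).toReal - (P (X ⁻¹' Set.Iic y)).toReal| ≤
        C * |x - y| ^ (1 - ε) :=
  stmt_6_general P X hXm φ ε hε1 hφX
end

section
/- Let L(t) = ∏_{j=1}^{∞} cos(2π · 3^{-j} t) be the characteristic function of the Cantor distribution. Then for all real t with |t| ≥ 8.5, one has |L(t)| ≤ e^{-0.027}. -/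
/-!
Write `x_j = 2πt / 3^(j+1)`. Every factor `cos x_j` has modulus at most `1`, and since the `x_j`
decrease geometrically by the factor 3, some `|x_J|` falls in `[π/6, π/2)` once `|t| ≥ 1/4`; that factor
alone bounds `|L(t)|` by `cos (π/6) = √3/2 < e^{-0.027}`. The infinite product converges because
`|1 - cos x_j| ≤ x_j² / 2` is summable.
-/

open Real

theorem norm_tprod_le_norm_of_norm_le_one {R : Type*} [NormedCommRing R] [NormOneClass R]
    {f : ℕ → R} (hf : Multipliable f) (h1 : ∀ j, ‖f j‖ ≤ 1) (J : ℕ) :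
    ‖∏' j, f j‖ ≤ ‖f J‖ := by
  classical
  refine le_of_tendsto (hf.hasProd.tendsto_prod_nat.norm) ?_
  filter_upwards [Filter.eventually_gt_atTop J] with n hn
  rw [← Finset.mul_prod_erase _ _ (Finset.mem_range.2 hn)]
  calc ‖f J * ∏ i ∈ (Finset.range n).erase J, f i‖
      ≤ ‖f J‖ * ∏ i ∈ (Finset.range n).erase J, ‖f i‖ :=
        (norm_mul_le _ _).trans (by gcongr; exact Finset.norm_prod_le _ _)
    _ ≤ ‖f J‖ * 1 := by
        gcongr
        exact Finset.prod_le_one (fun i _ => norm_nonneg _) (fun i _ => h1 i)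
    _ = ‖f J‖ := mul_one _

theorem multipliable_cos_of_summable_sq {ι : Type*} {x : ι → ℝ}
    (hx : Summable fun i => x i ^ 2) : Multipliable fun i => cos (x i) := by
  have hsummable : Summable fun i => cos (x i) - 1 := by
    refine (hx.div_const 2).of_norm_bounded fun i => ?_
    rw [Real.norm_eq_abs, abs_of_nonpos (by linarith [cos_le_one (x i)])]
    linarith [one_sub_sq_div_two_le_cos (x := x i)]
  simpa using Real.multipliable_one_add_of_summable hsummable

theorem multipliable_cos_div_pow_three (a : ℝ) :
    Multipliable fun j : ℕ => cos (a / 3 ^ (j + 1)) := by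
  refine multipliable_cos_of_summable_sq ?_
  have hgeom : Summable fun j : ℕ => (a / 3) ^ 2 * (1 / 9 : ℝ) ^ j :=
    (summable_geometric_of_lt_one (by norm_num) (by norm_num)).mul_left _
  refine hgeom.congr fun j => ?_
  rw [one_div_pow, show (9 : ℝ) ^ j = (3 ^ j) ^ 2 by rw [← pow_mul, mul_comm, pow_mul]; norm_num]
  field_simp
  ring

theorem abs_cos_le_sqrt_three_div_two {x : ℝ} (hlo : π / 6 ≤ |x|) (hhi : |x| ≤ π / 2) :
    |cos x| ≤ √3 / 2 := by
  rw [← cos_abs, abs_of_nonneg (cos_nonneg_of_mem_Icc ⟨by linarith [abs_nonneg x], hhi⟩),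
    ← cos_pi_div_six]
  exact cos_le_cos_of_nonneg_of_le_pi (by positivity) (by linarith) hlo

theorem exists_abs_div_pow_three_mem_Icc {a : ℝ} (ha : π / 2 ≤ |a|) :
    ∃ J : ℕ, π / 6 ≤ |a / 3 ^ (J + 1)| ∧ |a / 3 ^ (J + 1)| ≤ π / 2 := by
  have hy : 1 ≤ 2 * |a| / π := by rw [le_div_iff₀ pi_pos]; linarith
  obtain ⟨J, hlo, hhi⟩ := exists_nat_pow_near hy (by norm_num : (1 : ℝ) < 3)
  rw [le_div_iff₀ pi_pos] at hlo
  rw [div_lt_iff₀ pi_pos] at hhi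
  refine ⟨J, ?_, ?_⟩ <;>
    rw [abs_div, abs_of_pos (by positivity : (0 : ℝ) < 3 ^ (J + 1))]
  · rw [le_div_iff₀ (by positivity), pow_succ]; linarith
  · rw [div_le_iff₀ (by positivity)]; linarith

theorem abs_tprod_cos_div_pow_three_le {a : ℝ} (ha : π / 2 ≤ |a|) :
    |∏' j : ℕ, cos (a / 3 ^ (j + 1))| ≤ √3 / 2 := by
  obtain ⟨J, hlo, hhi⟩ := exists_abs_div_pow_three_mem_Icc ha
  calc |∏' j : ℕ, cos (a / 3 ^ (j + 1))| ≤ |cos (a / 3 ^ (J + 1))| :=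
        norm_tprod_le_norm_of_norm_le_one (multipliable_cos_div_pow_three a)
          (fun j => abs_cos_le_one _) J
    _ ≤ √3 / 2 := abs_cos_le_sqrt_three_div_two hlo hhi

theorem sqrt_three_div_two_le_exp : √3 / 2 ≤ exp (-0.027) := by
  have hsqrt : √3 < 1.8 := by
    rw [sqrt_lt' (by norm_num)]; norm_num
  linarith [add_one_le_exp (-0.027 : ℝ)]

/-- The characteristic function `L(t) = ∏_{j=1}^∞ cos(2π 3⁻ʲ t)` of the
Cantor distribution satisfies `|L(t)| ≤ e^{-0.027}` for all `|t| ≥ 8.5`. -/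
theorem stmt_7 :
    ∀ t : ℝ, 8.5 ≤ |t| →
      |∏' j : ℕ, Real.cos (2 * Real.pi * t / 3 ^ (j + 1))| ≤ Real.exp (-0.027) := by
  intro t ht
  have ha : π / 2 ≤ |2 * π * t| := by
    rw [abs_mul, abs_of_pos (by positivity : (0 : ℝ) < 2 * π)]
    nlinarith [pi_pos]
  exact (abs_tprod_cos_div_pow_three_le ha).trans sqrt_three_div_two_le_exp
end

section
/- Let n ≥ 2, let A = (a_{ij})_{i,j=1}^n be a nonzero symmetric real matrix such that a_{11}^{2k+1} + a_{22}^{2k+1} + ... + a_{nn}^{2k+1} ≠ 0 for every k = 0, 1, 2, ..., and let Q(x_1,...,x_n) = Σ_{i,j=1}^n a_{ij} x_i x_j. Let F be a symmetric probability distribution on ℝ belonging to the class 𝓕 (F has finite moments of all orders and is uniquely determined by its moments), and let Z_1,...,Z_n be i.i.d. with distribution F. Then for any i.i.d. symmetric random variables X_1,...,X_n, the equality in distribution Q(Z_1,...,Z_n) =_d Q(X_1,...,X_n) implies Z_1 =_d X_1 (i.e., the pair (Q,F) has the characterization property). -/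
open MeasureTheory Finset

/-!
Expanding `Q(Z)^k` and integrating, `E[Q(Z)^k]` becomes a polynomial in the moments of the
common law of the `Z_i`, in which the moment of order `2k` occurs only through the terms
`a_ii^k Z_i^(2k)`, with total coefficient `∑ a_ii^k`. This coefficient never vanishes (for even
`k` it is a sum of squares, not all zero), so by induction on the order the moments of `Q(Z)` and
`Q(X)` determine the even moments of `F` and `G`; the odd ones vanish by symmetry, and `F` is
determined by its moments.

That `G` has moments at all is seen on a line `x ↦ Q(y + x e_i)` with `a_ii ≠ 0`: for almost
every `y` all powers of this quadratic polynomial in `x` are `G`-integrable, and `|x|` is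
dominated by `K (1 + Q(y + x e_i)^2)`.
-/

lemma integrable_pow_of_abs_le {α : Type*} [MeasurableSpace α] {μ : Measure α} {f g : α → ℝ}
    (hf : AEStronglyMeasurable f μ) (hg : ∀ k : ℕ, Integrable (fun x => g x ^ k) μ) {K : ℝ}
    (hfg : ∀ x, |f x| ≤ K * (1 + g x ^ 2)) (p : ℕ) : Integrable (fun x => f x ^ p) μ := by
  have hpoly : Integrable (fun x => (g x ^ 2 + 1) ^ p) μ := by
    simp_rw [add_pow, one_pow, mul_one, ← pow_mul]
    exact integrable_finsetSum _ fun j _ => (hg (2 * j)).mul_const _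
  refine (hpoly.const_mul (K ^ p)).mono' (hf.pow p) (ae_of_all _ fun x => ?_)
  rw [norm_pow, Real.norm_eq_abs, ← mul_pow, add_comm (g x ^ 2)]
  exact pow_le_pow_left₀ (abs_nonneg _) (hfg x) p

lemma exists_abs_le_mul_one_add_sq_quadratic {A : ℝ} (hA : A ≠ 0) (B C : ℝ) :
    ∃ K, ∀ x : ℝ, |x| ≤ K * (1 + (A * x ^ 2 + B * x + C) ^ 2) := by
  -- from `A²x² = A(q - C) - ABx`, bounding both products by AM-GM
  refine ⟨1 + (A ^ 2 + B ^ 2 + 2 * C ^ 2 + 2) / A ^ 2, fun x => ?_⟩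
  set q := A * x ^ 2 + B * x + C
  have hsq : A ^ 2 * x ^ 2 ≤ (A ^ 2 + B ^ 2 + 2 * C ^ 2 + 2) * (1 + q ^ 2) := by
    nlinarith [sq_nonneg (A * x + B), sq_nonneg (A - (q - C)), sq_nonneg (q + C), sq_nonneg q,
      sq_nonneg (B * q), sq_nonneg (C * q), sq_nonneg (A * q)]
  have hx : x ^ 2 ≤ (A ^ 2 + B ^ 2 + 2 * C ^ 2 + 2) / A ^ 2 * (1 + q ^ 2) := by
    rw [div_mul_eq_mul_div, le_div_iff₀ (by positivity)]
    linarith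
  nlinarith [abs_nonneg x, sq_abs x, sq_nonneg (|x| - 1), sq_nonneg q]

lemma integrable_pow_of_integrable_quadratic_pow {μ : Measure ℝ} {A B C : ℝ} (hA : A ≠ 0)
    (h : ∀ k : ℕ, Integrable (fun x => (A * x ^ 2 + B * x + C) ^ k) μ) (p : ℕ) :
    Integrable (fun x : ℝ => x ^ p) μ := by
  obtain ⟨K, hK⟩ := exists_abs_le_mul_one_add_sq_quadratic hA B C
  exact integrable_pow_of_abs_le aestronglyMeasurable_id h hK p

lemma integral_pow_eq_zero_of_odd {μ : Measure ℝ} (hμ : μ.map (fun x => -x) = μ) {p : ℕ}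
    (hp : Odd p) : ∫ x, x ^ p ∂μ = 0 := by
  have h : ∫ x, x ^ p ∂μ = -∫ x, x ^ p ∂μ := by
    conv_lhs => rw [← hμ]
    rw [integral_map measurable_neg.aemeasurable (continuous_pow p).aestronglyMeasurable,
      ← integral_neg]
    simp_rw [hp.neg_pow]
  linarith

section MapEq

variable {α β E : Type*} [MeasurableSpace α] [MeasurableSpace β] [NormedAddCommGroup E]
  {f : α → β} {μ ν : Measure α} {φ : β → E}

lemma MeasureTheory.Integrable.comp_of_map_eq (hf : Measurable f) (h : μ.map f = ν.map f)
    (hφ : StronglyMeasurable φ) (hi : Integrable (fun x => φ (f x)) μ) :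
    Integrable (fun x => φ (f x)) ν := by
  have hmap := (integrable_map_measure hφ.aestronglyMeasurable hf.aemeasurable).2 hi
  rw [h] at hmap
  exact (integrable_map_measure hφ.aestronglyMeasurable hf.aemeasurable).1 hmap

lemma integral_comp_eq_of_map_eq [NormedSpace ℝ E] (hf : Measurable f) (h : μ.map f = ν.map f)
    (hφ : StronglyMeasurable φ) : ∫ x, φ (f x) ∂μ = ∫ x, φ (f x) ∂ν := by
  rw [← integral_map hf.aemeasurable hφ.aestronglyMeasurable, h,
    integral_map hf.aemeasurable hφ.aestronglyMeasurable]

end MapEq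

theorem MeasureTheory.Integrable.ae_integrable_insertNth {E F : Type*} [MeasurableSpace E]
    [NormedAddCommGroup F] {m : ℕ} {μ : Measure E} [SigmaFinite μ]
    {f : (Fin (m + 1) → E) → F} (hf : Integrable f (Measure.pi fun _ => μ)) (i : Fin (m + 1)) :
    ∀ᵐ y ∂(Measure.pi fun _ : Fin m => μ), Integrable (fun x => f (i.insertNth x y)) μ := by
  have hprod := ((measurePreserving_piFinSuccAbove (fun _ => μ) i).symm.integrable_comp_emb
    (MeasurableEquiv.measurableEmbedding _)).2 hf
  exact hprod.prod_left_ae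

section PairCount

variable {ι : Type*} [DecidableEq ι] {k : ℕ}

def pairCount (f : Fin k → ι × ι) (i : ι) : ℕ := #{m | (f m).1 = i} + #{m | (f m).2 = i}

lemma pairCount_le (f : Fin k → ι × ι) (i : ι) : pairCount f i ≤ 2 * k := by
  have h1 := card_filter_le univ fun m => (f m).1 = i
  have h2 := card_filter_le univ fun m => (f m).2 = i
  simp only [card_univ, Fintype.card_fin] at h1 h2
  rw [pairCount]
  omega

lemma pairCount_const_self (i : ι) : pairCount (fun _ : Fin k => (i, i)) i = 2 * k := by
  simp [pairCount, two_mul]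

lemma pairCount_const_of_ne {i j : ι} (h : j ≠ i) : pairCount (fun _ : Fin k => (i, i)) j = 0 := by
  simp [pairCount, h.symm]

lemma eq_const_of_pairCount_eq {f : Fin k → ι × ι} {i : ι} (h : pairCount f i = 2 * k) :
    f = fun _ => (i, i) := by
  have h1 := card_filter_le univ fun m => (f m).1 = i
  have h2 := card_filter_le univ fun m => (f m).2 = i
  simp only [card_univ, Fintype.card_fin] at h1 h2
  rw [pairCount] at h
  have e1 : #{m | (f m).1 = i} = Fintype.card (Fin k) := by rw [Fintype.card_fin]; omega
  have e2 : #{m | (f m).2 = i} = Fintype.card (Fin k) := by rw [Fintype.card_fin]; omega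
  exact funext fun m => Prod.ext (filter_eq_self.1 (eq_univ_of_card _ e1) m (mem_univ m))
    (filter_eq_self.1 (eq_univ_of_card _ e2) m (mem_univ m))

end PairCount

section QuadForm

variable {ι : Type*} [Fintype ι]

def quadForm (a : ι → ι → ℝ) (z : ι → ℝ) : ℝ := ∑ i, ∑ j, a i j * z i * z j

lemma measurable_quadForm (a : ι → ι → ℝ) : Measurable (quadForm a) := by
  unfold quadForm
  fun_prop

lemma quadForm_add_single [DecidableEq ι] (a : ι → ι → ℝ) (u : ι → ℝ) (i : ι) (x : ℝ) :
    quadForm a (u + Pi.single i x) =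
      a i i * x ^ 2 + (∑ j, (a i j + a j i) * u j) * x + quadForm a u := by
  simp only [quadForm, Pi.add_apply, Pi.single_apply, mul_add, add_mul, sum_add_distrib, mul_ite,
    ite_mul, mul_zero, zero_mul, sum_ite_irrel, sum_const_zero, Fintype.sum_ite_eq', sum_mul]
  simp only [mul_comm, mul_left_comm]
  ring

lemma exists_quadForm_insertNth_eq {m : ℕ} (a : Fin (m + 1) → Fin (m + 1) → ℝ)
    (i : Fin (m + 1)) (y : Fin m → ℝ) :
    ∃ B C, ∀ x, quadForm a (i.insertNth x y) = a i i * x ^ 2 + B * x + C := by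
  let u : Fin (m + 1) → ℝ := i.insertNth 0 y
  refine ⟨∑ j, (a i j + a j i) * u j, quadForm a u, fun x => ?_⟩
  rw [← quadForm_add_single, ← Fin.insertNth_zero_right, ← Fin.insertNth_add, zero_add, add_zero]

lemma integrable_pow_of_integrable_quadForm_pow {n : ℕ} {a : Fin n → Fin n → ℝ} {i : Fin n}
    (hi : a i i ≠ 0) {μ : Measure ℝ} [IsProbabilityMeasure μ]
    (h : ∀ k : ℕ, Integrable (fun z => quadForm a z ^ k) (Measure.pi fun _ => μ)) (p : ℕ) :
    Integrable (fun x : ℝ => x ^ p) μ := by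
  obtain ⟨m, rfl⟩ : ∃ m, n = m + 1 := Nat.exists_eq_add_one_of_ne_zero i.pos.ne'
  obtain ⟨y, hy⟩ := (ae_all_iff.2 fun k => (h k).ae_integrable_insertNth i).exists
  obtain ⟨B, C, hBC⟩ := exists_quadForm_insertNth_eq a i y
  simp_rw [hBC] at hy
  exact integrable_pow_of_integrable_quadratic_pow hi hy p

variable [DecidableEq ι] {k : ℕ}

lemma prod_comp_eq_prod_pow_card {κ : Type*} [Fintype κ] [DecidableEq κ] (g : κ → ι)
    (z : ι → ℝ) : ∏ m, z (g m) = ∏ i, z i ^ #{m | g m = i} := by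
  simp_rw [← prod_fiberwise' univ g z, prod_const]

lemma quadForm_pow (a : ι → ι → ℝ) (z : ι → ℝ) (k : ℕ) :
    quadForm a z ^ k =
      ∑ f : Fin k → ι × ι, (∏ m, a (f m).1 (f m).2) * ∏ i, z i ^ pairCount f i := by
  rw [quadForm, ← Fintype.sum_prod_type', Fintype.sum_pow]
  refine Fintype.sum_congr _ _ fun f => ?_
  simp_rw [pairCount, pow_add, prod_mul_distrib, ← prod_comp_eq_prod_pow_card, mul_assoc]

/-- `quadFormMoment a k M` is `E[Q(Z)^k]` when the `Z_i` are i.i.d. with moment sequence `M`. -/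
def quadFormMoment (a : ι → ι → ℝ) (k : ℕ) (M : ℕ → ℝ) : ℝ :=
  ∑ f : Fin k → ι × ι, (∏ m, a (f m).1 (f m).2) * ∏ i, M (pairCount f i)

variable {μ : Measure ℝ} [SigmaFinite μ]

lemma integrable_quadForm_pow (a : ι → ι → ℝ) (hμ : ∀ p : ℕ, Integrable (fun x => x ^ p) μ)
    (k : ℕ) : Integrable (fun z => quadForm a z ^ k) (Measure.pi fun _ => μ) := by
  simp_rw [quadForm_pow]
  exact integrable_finsetSum _ fun f _ =>
    (Integrable.fintype_prod fun i => hμ (pairCount f i)).const_mul _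

lemma integral_quadForm_pow (a : ι → ι → ℝ) (hμ : ∀ p : ℕ, Integrable (fun x => x ^ p) μ)
    (k : ℕ) : ∫ z, quadForm a z ^ k ∂(Measure.pi fun _ => μ) =
      quadFormMoment a k fun p => ∫ x, x ^ p ∂μ := by
  simp_rw [quadForm_pow]
  rw [integral_finsetSum _ fun f _ =>
    (Integrable.fintype_prod fun i => hμ (pairCount f i)).const_mul _]
  refine Fintype.sum_congr _ _ fun f => ?_
  rw [integral_const_mul, integral_fintype_prod_eq_prod (fun i x => x ^ pairCount f i)]

end QuadForm

section Moments

variable {ι : Type*} [Fintype ι] [DecidableEq ι] {k : ℕ}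

lemma quadFormMoment_sub (a : ι → ι → ℝ) (hk : 0 < k) {M M' : ℕ → ℝ} (hM0 : M 0 = 1)
    (h : ∀ j < 2 * k, M j = M' j) :
    quadFormMoment a k M - quadFormMoment a k M' =
      (∑ i, a i i ^ k) * (M (2 * k) - M' (2 * k)) := by
  have hterm : ∀ f : Fin k → ι × ι,
      (∏ m, a (f m).1 (f m).2) * ∏ i, M (pairCount f i) -
          (∏ m, a (f m).1 (f m).2) * ∏ i, M' (pairCount f i) =
        ∑ i, if f = (fun _ => (i, i)) then a i i ^ k * (M (2 * k) - M' (2 * k)) else 0 := by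
    intro f
    by_cases hf : ∃ i, f = fun _ => (i, i)
    · obtain ⟨i, rfl⟩ := hf
      have hprod : ∀ N : ℕ → ℝ, N 0 = 1 →
          ∏ j, N (pairCount (fun _ : Fin k => (i, i)) j) = N (2 * k) := fun N hN => by
        rw [Fintype.prod_eq_single i fun j hj => by rw [pairCount_const_of_ne hj, hN],
          pairCount_const_self]
      rw [hprod M hM0, hprod M' (by rw [← h 0 (by omega), hM0]), Fintype.sum_eq_single i,
        if_pos rfl, prod_const, card_univ, Fintype.card_fin, mul_sub]
      intro j hj
      refine if_neg fun hij => hj ?_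
      exact (congrArg Prod.fst (congrFun hij ⟨0, hk⟩)).symm
    · simp only [not_exists] at hf
      rw [Fintype.sum_eq_zero _ fun i => if_neg (hf i), sub_eq_zero]
      congr 1
      refine prod_congr rfl fun i _ => h _ ?_
      exact (pairCount_le f i).lt_of_ne fun he => hf i (eq_const_of_pairCount_eq he)
  rw [quadFormMoment, quadFormMoment, ← sum_sub_distrib, Fintype.sum_congr _ _ hterm, sum_comm,
    sum_mul]
  exact Fintype.sum_congr _ _ fun i => Fintype.sum_ite_eq' _ _

lemma eq_of_quadFormMoment_eq (a : ι → ι → ℝ) (ha : ∀ k, ∑ i, a i i ^ k ≠ 0) {M M' : ℕ → ℝ}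
    (hM0 : M 0 = 1) (hM'0 : M' 0 = 1) (hodd : ∀ p, Odd p → M p = M' p)
    (h : ∀ k, quadFormMoment a k M = quadFormMoment a k M') : M = M' := by
  funext p
  induction p using Nat.strong_induction_on with
  | _ p ih =>
    obtain ⟨k, rfl | rfl⟩ := Nat.even_or_odd' p
    · rcases Nat.eq_zero_or_pos k with rfl | hk
      · rw [mul_zero, hM0, hM'0]
      · have hsub := quadFormMoment_sub a hk hM0 ih
        rw [h k, sub_self, eq_comm, mul_eq_zero] at hsub
        exact sub_eq_zero.1 (hsub.resolve_left (ha k))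
    · exact hodd _ (odd_two_mul_add_one k)

end Moments

lemma sum_pow_ne_zero_of_sum_odd_pow_ne_zero {ι : Type*} [Fintype ι] {d : ι → ℝ}
    (h : ∀ k : ℕ, ∑ i, d i ^ (2 * k + 1) ≠ 0) (k : ℕ) : ∑ i, d i ^ k ≠ 0 := by
  obtain ⟨j, rfl | rfl⟩ := Nat.even_or_odd' k
  · obtain ⟨i, hi⟩ : ∃ i, d i ≠ 0 := by
      by_contra! h0
      exact h 0 (by simp [h0])
    exact (sum_pos' (fun i _ => (even_two_mul j).pow_nonneg (d i))
      ⟨i, mem_univ i, (even_two_mul j).pow_pos hi⟩).ne'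
  · exact h j

theorem stmt_15_general (n : ℕ) (a : Fin n → Fin n → ℝ)
    (hdiag : ∀ k : ℕ, (∑ i, a i i ^ (2 * k + 1)) ≠ 0)
    (F : Measure ℝ) [IsProbabilityMeasure F]
    (hFsymm : Measure.map (fun x : ℝ => -x) F = F)
    -- `F` has finite moments of all orders:
    (hmom : ∀ p : ℕ, Integrable (fun x : ℝ => x ^ p) F)
    -- `F` is uniquely determined by its moments:
    (hdet : ∀ μ : Measure ℝ, IsProbabilityMeasure μ →
      (∀ p : ℕ, Integrable (fun x : ℝ => x ^ p) μ) →
      (∀ p : ℕ, (∫ x, x ^ p ∂μ) = ∫ x, x ^ p ∂F) → μ = F)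
    (G : Measure ℝ) [IsProbabilityMeasure G]
    (hGsymm : Measure.map (fun x : ℝ => -x) G = G)
    (hQ : Measure.map (fun z : Fin n → ℝ => ∑ i, ∑ j, a i j * z i * z j)
        (Measure.pi fun _ => F) =
      Measure.map (fun z : Fin n → ℝ => ∑ i, ∑ j, a i j * z i * z j)
        (Measure.pi fun _ => G)) :
    G = F := by
  obtain ⟨i, hi⟩ : ∃ i, a i i ≠ 0 := by
    by_contra! h
    exact hdiag 0 (by simp [h])
  have hGmom := integrable_pow_of_integrable_quadForm_pow hi fun k =>
    (integrable_quadForm_pow a hmom k).comp_of_map_eq (measurable_quadForm a) hQ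
      (continuous_pow k).stronglyMeasurable
  have hodd : ∀ p, Odd p → ∫ x, x ^ p ∂G = ∫ x, x ^ p ∂F := fun p hp => by
    rw [integral_pow_eq_zero_of_odd hGsymm hp, integral_pow_eq_zero_of_odd hFsymm hp]
  have hQmom : ∀ k, quadFormMoment a k (fun p => ∫ x, x ^ p ∂G) =
      quadFormMoment a k (fun p => ∫ x, x ^ p ∂F) := fun k => by
    rw [← integral_quadForm_pow a hGmom, ← integral_quadForm_pow a hmom]
    exact (integral_comp_eq_of_map_eq (measurable_quadForm a) hQ
      (continuous_pow k).stronglyMeasurable).symm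
  refine hdet G inferInstance hGmom (congrFun ?_)
  exact eq_of_quadFormMoment_eq a (sum_pow_ne_zero_of_sum_odd_pow_ne_zero hdiag) (by simp)
    (by simp) hodd hQmom

/-- (Theorem 12.) Let `n ≥ 2`, `A = (a_{ij})` a nonzero symmetric real
matrix with `a₁₁^{2k+1} + ⋯ + a_{nn}^{2k+1} ≠ 0` for every `k = 0, 1, 2, …`, and
`Q(x) = Σ a_{ij} x_i x_j`. Let `F` be a symmetric probability distribution on `ℝ` with finite
moments of all orders which is uniquely determined by its moments, and let `Z₁,…,Z_n` be
i.i.d. with distribution `F`. Then for any i.i.d. symmetric random variables `X₁,…,X_n`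
(common distribution `G`), `Q(Z₁,…,Z_n) =_d Q(X₁,…,X_n)` implies `Z₁ =_d X₁`. -/
theorem stmt_15 (n : ℕ) (hn : 2 ≤ n) (a : Fin n → Fin n → ℝ)
    (hsymm : ∀ i j, a i j = a j i) (hA : a ≠ 0)
    (hdiag : ∀ k : ℕ, (∑ i, a i i ^ (2 * k + 1)) ≠ 0)
    (F : Measure ℝ) [IsProbabilityMeasure F]
    (hFsymm : Measure.map (fun x : ℝ => -x) F = F)
    -- `F` has finite moments of all orders:
    (hmom : ∀ p : ℕ, Integrable (fun x : ℝ => x ^ p) F)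
    -- `F` is uniquely determined by its moments:
    (hdet : ∀ μ : Measure ℝ, IsProbabilityMeasure μ →
      (∀ p : ℕ, Integrable (fun x : ℝ => x ^ p) μ) →
      (∀ p : ℕ, (∫ x, x ^ p ∂μ) = ∫ x, x ^ p ∂F) → μ = F)
    (G : Measure ℝ) [IsProbabilityMeasure G]
    (hGsymm : Measure.map (fun x : ℝ => -x) G = G)
    (hQ : Measure.map (fun z : Fin n → ℝ => ∑ i, ∑ j, a i j * z i * z j)
        (Measure.pi fun _ => F) =
      Measure.map (fun z : Fin n → ℝ => ∑ i, ∑ j, a i j * z i * z j)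
        (Measure.pi fun _ => G)) :
    G = F :=
  stmt_15_general n a hdiag F hFsymm hmom hdet G hGsymm hQ
end

section
/- Let n ≥ 2 and let A = (a_{ij})_{i,j=1}^n be a nonzero symmetric real matrix with a_{ij} = 0 for all i ≠ j, with a_{ii} ≠ 0 for some i, and with a_{11} + a_{22} + ... + a_{nn} = 0; let Q(x_1,...,x_n) = Σ_{i,j=1}^n a_{ij} x_i x_j. Then for every symmetric probability distribution F on ℝ the pair (Q,F) does NOT have the characterization property: there exist i.i.d. symmetric random variables X_1,...,X_n with Q(Z_1,...,Z_n) =_d Q(X_1,...,X_n) (Z_1,...,Z_n i.i.d. with distribution F) but X_1 not equal in distribution to Z_1. In particular, if Z has distribution F, ζ is independent of Z with P(ζ = 1) = P(ζ = -1) = 1/2, and c > 0, then X = ζ(Z² + c)^{1/2} is symmetric and, for X_1,...,X_n i.i.d. copies of X, Q(X_1,...,X_n) =_d Q(Z_1,...,Z_n). -/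
open MeasureTheory Real Set
open scoped ENNReal

/-!
Since `A` is diagonal, `Q(x) = L(x₁², …, x_n²)` for the linear form `L(y) = ∑ aᵢᵢ yᵢ`, and since
the trace vanishes, `L(y + c·𝟙) = L(y)`. Hence the law of `Q(X₁, …, X_n)` depends only on the law
of `X₁²`, and only up to a deterministic shift. For `X = ζ √(Z² + c)` one has `X² = Z² + c`, so
`Q(X) =_d Q(Z)`, while `X ≠_d Z` because no probability measure on `ℝ` is invariant under a
nonzero translation (its distribution function would be periodic with limits `0` and `1` at `∓∞`).
-/

open Filter Topology ProbabilityTheory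

namespace Function.Periodic

lemma eq_of_tendsto_atTop_of_tendsto_atBot {α : Type*} [TopologicalSpace α] [T2Space α]
    {f : ℝ → α} {c : ℝ} {a b : α} (hf : Periodic f c) (hc : c ≠ 0)
    (htop : Tendsto f atTop (𝓝 a)) (hbot : Tendsto f atBot (𝓝 b)) : a = b := by
  wlog hc_pos : 0 < c generalizing c
  · exact this hf.neg (neg_ne_zero.mpr hc) (by linarith [hc.lt_or_gt.resolve_right hc_pos])
  have hf_eq_a : f 0 = a := by
    refine tendsto_nhds_unique (f := fun k : ℕ => f (k * c)) ?_
      (htop.comp (tendsto_natCast_atTop_atTop.atTop_mul_const hc_pos))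
    simp only [hf.nat_mul_eq, tendsto_const_nhds]
  have hf_eq_b : f 0 = b := by
    refine tendsto_nhds_unique (f := fun k : ℕ => f (k * -c)) ?_
      (hbot.comp (tendsto_natCast_atTop_atTop.atTop_mul_const_of_neg (neg_neg_of_pos hc_pos)))
    simp only [hf.neg.nat_mul_eq, tendsto_const_nhds]
  exact hf_eq_a.symm.trans hf_eq_b

end Function.Periodic

lemma ProbabilityTheory.cdf_periodic_of_map_add_const_eq (μ : Measure ℝ) [IsProbabilityMeasure μ]
    {c : ℝ} (h : μ.map (· + c) = μ) : Function.Periodic (cdf μ) c := by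
  intro x
  have : IsProbabilityMeasure (μ.map (· + c)) := Measure.isProbabilityMeasure_map (by fun_prop)
  conv_lhs => rw [← h]
  rw [cdf_eq_real, cdf_eq_real,
    map_measureReal_apply (by fun_prop) measurableSet_Iic]
  congr 1
  ext y
  simp

lemma MeasureTheory.Measure.map_add_const_ne_self (μ : Measure ℝ) [IsProbabilityMeasure μ]
    {c : ℝ} (hc : c ≠ 0) : μ.map (· + c) ≠ μ := fun h =>
  zero_ne_one <| Eq.symm <|
    (cdf_periodic_of_map_add_const_eq μ h).eq_of_tendsto_atTop_of_tendsto_atBot hc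
      (tendsto_cdf_atTop μ) (tendsto_cdf_atBot μ)

/-- The law of `ζ · f Z` for `Z ∼ μ` and a fair random sign `ζ` independent of `Z`. -/
noncomputable def randomSignLaw {α : Type*} [MeasurableSpace α] (μ : Measure α) (f : α → ℝ) :
    Measure ℝ :=
  (2 : ℝ≥0∞)⁻¹ • (μ.map f + μ.map fun x => -f x)

section randomSignLaw

variable {α : Type*} [MeasurableSpace α] {μ : Measure α} {f : α → ℝ}

lemma isProbabilityMeasure_randomSignLaw [IsProbabilityMeasure μ] (hf : Measurable f) :
    IsProbabilityMeasure (randomSignLaw μ f) := by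
  have := Measure.isProbabilityMeasure_map (μ := μ) hf.aemeasurable
  have := Measure.isProbabilityMeasure_map (μ := μ) (f := fun x => -f x) hf.neg.aemeasurable
  constructor
  simp only [randomSignLaw, Measure.smul_apply, Measure.add_apply, measure_univ, smul_eq_mul]
  rw [one_add_one_eq_two, ENNReal.inv_mul_cancel two_ne_zero ENNReal.ofNat_ne_top]

lemma map_neg_randomSignLaw (hf : Measurable f) :
    (randomSignLaw μ f).map (fun x => -x) = randomSignLaw μ f := by
  rw [randomSignLaw, Measure.map_smul, Measure.map_add _ _ measurable_neg,
    Measure.map_map measurable_neg hf, Measure.map_map measurable_neg (f := fun x => -f x) hf.neg,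
    add_comm]
  simp only [Function.comp_def, neg_neg]

lemma map_sq_randomSignLaw (hf : Measurable f) :
    (randomSignLaw μ f).map (· ^ 2) = μ.map fun x => f x ^ 2 := by
  have hsq : Measurable fun x : ℝ => x ^ 2 := by fun_prop
  rw [randomSignLaw, Measure.map_smul, Measure.map_add _ _ hsq, Measure.map_map hsq hf,
    Measure.map_map hsq (f := fun x => -f x) hf.neg]
  simp only [Function.comp_def, neg_sq]
  rw [← two_smul ℝ≥0∞, smul_smul, ENNReal.inv_mul_cancel two_ne_zero ENNReal.ofNat_ne_top,
    one_smul]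

end randomSignLaw

lemma MeasureTheory.Measure.map_pi_comp_pi_map {ι α β γ : Type*} [Fintype ι] [MeasurableSpace α]
    [MeasurableSpace β] [MeasurableSpace γ] (μ : Measure α) [IsFiniteMeasure μ] {f : α → β}
    (hf : Measurable f) {L : (ι → β) → γ} (hL : Measurable L) :
    (Measure.pi fun _ : ι => μ).map (fun z => L fun i => f (z i)) =
      (Measure.pi fun _ : ι => μ.map f).map L := by
  rw [← Measure.pi_map_pi fun _ => hf.aemeasurable, Measure.map_map hL (by fun_prop)]
  rfl

section DiagonalQuadraticForm

variable {ι : Type*} [Fintype ι]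

lemma sum_sum_mul_eq_sum_mul_sq_of_offDiag_eq_zero (a : ι → ι → ℝ)
    (hoffdiag : ∀ i j, i ≠ j → a i j = 0) (z : ι → ℝ) :
    ∑ i, ∑ j, a i j * z i * z j = ∑ i, a i i * z i ^ 2 := by
  refine Finset.sum_congr rfl fun i _ => ?_
  rw [Finset.sum_eq_single_of_mem i (Finset.mem_univ i) fun j _ hji => by
    rw [hoffdiag i j hji.symm, zero_mul, zero_mul]]
  ring

lemma sum_mul_add_const_of_sum_eq_zero {w : ι → ℝ} (hw : ∑ i, w i = 0) (y : ι → ℝ) (c : ℝ) :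
    ∑ i, w i * (y i + c) = ∑ i, w i * y i := by
  simp only [mul_add, Finset.sum_add_distrib, ← Finset.sum_mul, hw, zero_mul, add_zero]

theorem map_sum_mul_sq_pi_eq_of_map_sq_eq {w : ι → ℝ} (hw : ∑ i, w i = 0)
    {G F : Measure ℝ} [IsFiniteMeasure G] [IsFiniteMeasure F] {c : ℝ}
    (h : G.map (· ^ 2) = F.map fun z => z ^ 2 + c) :
    (Measure.pi fun _ : ι => G).map (fun z => ∑ i, w i * z i ^ 2) =
      (Measure.pi fun _ : ι => F).map (fun z => ∑ i, w i * z i ^ 2) := by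
  set L : (ι → ℝ) → ℝ := fun y => ∑ i, w i * y i
  have hL : Measurable L := by fun_prop
  have hsq : Measurable fun x : ℝ => x ^ 2 := by fun_prop
  have hshift : Measurable fun x : ℝ => x + c := by fun_prop
  have hF_shift : F.map (fun z => z ^ 2 + c) = (F.map (· ^ 2)).map (· + c) :=
    (Measure.map_map hshift hsq).symm
  calc (Measure.pi fun _ : ι => G).map (fun z => L fun i => z i ^ 2)
      = (Measure.pi fun _ : ι => G.map (· ^ 2)).map L := Measure.map_pi_comp_pi_map G hsq hL
    _ = (Measure.pi fun _ : ι => F.map (· ^ 2)).map (fun y => L fun i => y i + c) := by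
      rw [h, hF_shift, Measure.map_pi_comp_pi_map _ hshift hL]
    _ = (Measure.pi fun _ : ι => F.map (· ^ 2)).map L := by
      simp only [L, sum_mul_add_const_of_sum_eq_zero hw]
    _ = (Measure.pi fun _ : ι => F).map (fun z => L fun i => z i ^ 2) :=
      (Measure.map_pi_comp_pi_map F hsq hL).symm

end DiagonalQuadraticForm

theorem stmt_16_general (n : ℕ) (a : Fin n → Fin n → ℝ)
    (hoffdiag : ∀ i j, i ≠ j → a i j = 0)
    (htrace : (∑ i, a i i) = 0)
    (F : Measure ℝ) [IsProbabilityMeasure F] :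
    (∃ G : Measure ℝ, IsProbabilityMeasure G ∧
        Measure.map (fun x : ℝ => -x) G = G ∧
        Measure.map (fun z : Fin n → ℝ => ∑ i, ∑ j, a i j * z i * z j)
            (Measure.pi fun _ => G) =
          Measure.map (fun z : Fin n → ℝ => ∑ i, ∑ j, a i j * z i * z j)
            (Measure.pi fun _ => F) ∧
        G ≠ F) ∧
    ∀ c : ℝ, 0 < c →
      IsProbabilityMeasure
          ((2 : ℝ≥0∞)⁻¹ • (Measure.map (fun z : ℝ => Real.sqrt (z ^ 2 + c)) F +
            Measure.map (fun z : ℝ => -Real.sqrt (z ^ 2 + c)) F)) ∧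
      Measure.map (fun x : ℝ => -x)
          ((2 : ℝ≥0∞)⁻¹ • (Measure.map (fun z : ℝ => Real.sqrt (z ^ 2 + c)) F +
            Measure.map (fun z : ℝ => -Real.sqrt (z ^ 2 + c)) F)) =
        (2 : ℝ≥0∞)⁻¹ • (Measure.map (fun z : ℝ => Real.sqrt (z ^ 2 + c)) F +
          Measure.map (fun z : ℝ => -Real.sqrt (z ^ 2 + c)) F) ∧
      Measure.map (fun z : Fin n → ℝ => ∑ i, ∑ j, a i j * z i * z j)
          (Measure.pi fun _ =>
            (2 : ℝ≥0∞)⁻¹ • (Measure.map (fun z : ℝ => Real.sqrt (z ^ 2 + c)) F +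
              Measure.map (fun z : ℝ => -Real.sqrt (z ^ 2 + c)) F)) =
        Measure.map (fun z : Fin n → ℝ => ∑ i, ∑ j, a i j * z i * z j)
          (Measure.pi fun _ => F) := by
  have hQ : (fun z : Fin n → ℝ => ∑ i, ∑ j, a i j * z i * z j) = fun z => ∑ i, a i i * z i ^ 2 :=
    funext (sum_sum_mul_eq_sum_mul_sq_of_offDiag_eq_zero a hoffdiag)
  have hsqrt (c : ℝ) : Measurable fun z : ℝ => Real.sqrt (z ^ 2 + c) := by fun_prop
  have hsq_law (c : ℝ) (hc : 0 ≤ c) :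
      (randomSignLaw F fun z => √(z ^ 2 + c)).map (· ^ 2) = F.map fun z => z ^ 2 + c := by
    rw [map_sq_randomSignLaw (hsqrt c)]
    simp only [Real.sq_sqrt (add_nonneg (sq_nonneg _) hc)]
  have hG (c : ℝ) (hc : 0 < c) :
      IsProbabilityMeasure (randomSignLaw F fun z => √(z ^ 2 + c)) ∧
      (randomSignLaw F fun z => √(z ^ 2 + c)).map (fun x => -x) =
        randomSignLaw F (fun z => √(z ^ 2 + c)) ∧
      (Measure.pi fun _ : Fin n => randomSignLaw F fun z => √(z ^ 2 + c)).map
          (fun z => ∑ i, a i i * z i ^ 2) =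
        (Measure.pi fun _ : Fin n => F).map fun z => ∑ i, a i i * z i ^ 2 :=
    have := isProbabilityMeasure_randomSignLaw (μ := F) (hsqrt c)
    ⟨this, map_neg_randomSignLaw (hsqrt c),
      map_sum_mul_sq_pi_eq_of_map_sq_eq htrace (hsq_law c hc.le)⟩
  rw [hQ]
  obtain ⟨hG_prob, hG_symm, hG_law⟩ := hG 1 one_pos
  refine ⟨⟨_, hG_prob, hG_symm, hG_law, fun hGF => ?_⟩, hG⟩
  have hF_sq := hsq_law 1 zero_le_one
  rw [hGF] at hF_sq
  have := Measure.isProbabilityMeasure_map (μ := F) (f := (· ^ 2)) (by fun_prop)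
  exact (F.map (· ^ 2)).map_add_const_ne_self one_ne_zero
    ((Measure.map_map (by fun_prop) (by fun_prop)).trans hF_sq.symm)

/-- (Theorem 13.) Let `n ≥ 2` and let `A = (a_{ij})` be a nonzero symmetric
real diagonal matrix (`a_{ij} = 0` for `i ≠ j`, `a_{ii} ≠ 0` for some `i`) with zero trace,
and `Q(x) = Σ a_{ij} x_i x_j`. Then for every symmetric probability distribution `F` the pair
`(Q, F)` does not have the characterization property: there is a symmetric probability
distribution `G ≠ F` with `Q(X₁,…,X_n) =_d Q(Z₁,…,Z_n)` for `Xᵢ` i.i.d. `G`, `Zᵢ` i.i.d. `F`.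
In particular, for every `c > 0` the distribution `G_c` of `X = ζ(Z² + c)^{1/2}` — where
`Z ~ F` and `ζ = ±1` with probability `1/2` independently of `Z`, i.e.
`G_c = ½ map (√(·² + c)) F + ½ map (-√(·² + c)) F` — is symmetric and satisfies
`Q(X₁,…,X_n) =_d Q(Z₁,…,Z_n)`. -/
theorem stmt_16 (n : ℕ) (hn : 2 ≤ n) (a : Fin n → Fin n → ℝ)
    (hsymm : ∀ i j, a i j = a j i) (hA : a ≠ 0)
    (hoffdiag : ∀ i j, i ≠ j → a i j = 0)
    (hdiagne : ∃ i, a i i ≠ 0)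
    (htrace : (∑ i, a i i) = 0)
    (F : Measure ℝ) [IsProbabilityMeasure F]
    (hFsymm : Measure.map (fun x : ℝ => -x) F = F) :
    (∃ G : Measure ℝ, IsProbabilityMeasure G ∧
        Measure.map (fun x : ℝ => -x) G = G ∧
        Measure.map (fun z : Fin n → ℝ => ∑ i, ∑ j, a i j * z i * z j)
            (Measure.pi fun _ => G) =
          Measure.map (fun z : Fin n → ℝ => ∑ i, ∑ j, a i j * z i * z j)
            (Measure.pi fun _ => F) ∧
        G ≠ F) ∧
    ∀ c : ℝ, 0 < c →
      IsProbabilityMeasure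
          ((2 : ℝ≥0∞)⁻¹ • (Measure.map (fun z : ℝ => Real.sqrt (z ^ 2 + c)) F +
            Measure.map (fun z : ℝ => -Real.sqrt (z ^ 2 + c)) F)) ∧
      Measure.map (fun x : ℝ => -x)
          ((2 : ℝ≥0∞)⁻¹ • (Measure.map (fun z : ℝ => Real.sqrt (z ^ 2 + c)) F +
            Measure.map (fun z : ℝ => -Real.sqrt (z ^ 2 + c)) F)) =
        (2 : ℝ≥0∞)⁻¹ • (Measure.map (fun z : ℝ => Real.sqrt (z ^ 2 + c)) F +
          Measure.map (fun z : ℝ => -Real.sqrt (z ^ 2 + c)) F) ∧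
      Measure.map (fun z : Fin n → ℝ => ∑ i, ∑ j, a i j * z i * z j)
          (Measure.pi fun _ =>
            (2 : ℝ≥0∞)⁻¹ • (Measure.map (fun z : ℝ => Real.sqrt (z ^ 2 + c)) F +
              Measure.map (fun z : ℝ => -Real.sqrt (z ^ 2 + c)) F)) =
        Measure.map (fun z : Fin n → ℝ => ∑ i, ∑ j, a i j * z i * z j)
          (Measure.pi fun _ => F) :=
  stmt_16_general n a hoffdiag htrace F
end
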